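/- Let (r,s) be one of (4,4), (4,2p), or (2p,4), where p is an odd prime. Then for every nontrivial normal subgroup L of G⁺(r,s), the normal quotient Γ⁺(r,s)_L either has at most 2 vertices or is isomorphic to a cycle graph C_m for some m ≥ 3; moreover the normal quotient of Γ⁺(r,s) by ⟨ν²⟩ is isomorphic to the cycle C_r and the normal quotient by ⟨μ²⟩ is isomorphic to the cycle C_s. In particular, (Γ⁺(r,s), G⁺(r,s)) is basic of cycle type. -/

import Mathlib

open SimpleGraph

namespace OG4

variable {V : Type*} {W : Type*}

/-! ### Normal quotients, cycles, and basic pairs -/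

/-- The setoid of orbits of a group `N` of permutations of `V`. -/
def orbitSetoid (N : Subgroup (Equiv.Perm V)) : Setoid V := MulAction.orbitRel N V

/-- The (normal) quotient graph of a graph `Γ` with respect to a group `N` of permutations:
its vertices are the `N`-orbits, two distinct orbits being adjacent iff some vertex of one is
adjacent in `Γ` to some vertex of the other. -/
def quotientGraph (Γ : SimpleGraph V) (N : Subgroup (Equiv.Perm V)) :
    SimpleGraph (Quotient (orbitSetoid N)) :=
  SimpleGraph.fromRel fun a b =>
    ∃ x y : V, Quotient.mk (orbitSetoid N) x = a ∧ Quotient.mk (orbitSetoid N) y = b ∧ Γ.Adj x y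

/-- `N` is a normal subgroup of the subgroup `G` (of some ambient group). -/
def NormalIn {G : Type*} [Group G] (N H : Subgroup G) : Prop :=
  N ≤ H ∧ ∀ h ∈ H, ∀ n ∈ N, h * n * h⁻¹ ∈ N

/-- A graph is isomorphic to a cycle graph `C_m` for some `m ≥ 3`. -/
def IsoCycle (Δ : SimpleGraph W) : Prop :=
  ∃ m : ℕ, 3 ≤ m ∧ Nonempty (Δ ≃g SimpleGraph.cycleGraph m)

/-- Every normal quotient of `(Γ, G)` relative to a nontrivial normal subgroup is degenerate:
it has at most 2 vertices or is a cycle. -/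
def IsBasic (Γ : SimpleGraph V) (G : Subgroup (Equiv.Perm V)) : Prop :=
  ∀ N : Subgroup (Equiv.Perm V), NormalIn N G → N ≠ ⊥ →
    Nat.card (Quotient (orbitSetoid N)) ≤ 2 ∨ IsoCycle (quotientGraph Γ N)

/-- `(Γ, G)` is basic of cycle type. -/
def BasicOfCycleType (Γ : SimpleGraph V) (G : Subgroup (Equiv.Perm V)) : Prop :=
  IsBasic Γ G ∧
    ∃ N : Subgroup (Equiv.Perm V), NormalIn N G ∧ N ≠ ⊥ ∧ IsoCycle (quotientGraph Γ N)

/-- The kernel of the action of `G` on the set of `N`-orbits. -/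
def orbitKernel (G N : Subgroup (Equiv.Perm V)) : Subgroup (Equiv.Perm V) where
  carrier := {g | g ∈ G ∧ ∀ x : V,
    Quotient.mk (orbitSetoid N) (g x) = Quotient.mk (orbitSetoid N) x}
  one_mem' := ⟨G.one_mem, fun x => by simp⟩
  mul_mem' := by
    rintro a b ⟨haG, ha⟩ ⟨hbG, hb⟩
    refine ⟨G.mul_mem haG hbG, fun x => ?_⟩
    rw [Equiv.Perm.mul_apply, ha (b x), hb x]
  inv_mem' := by
    rintro a ⟨haG, ha⟩
    refine ⟨G.inv_mem haG, fun x => ?_⟩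
    have h := ha (a⁻¹ x)
    rw [show a (a⁻¹ x) = x from by simp] at h
    exact h.symm

/-- `(Γ, G)` has a pair of independent cyclic normal quotients. -/
def HasIndepCyclicQuotients (Γ : SimpleGraph V) (G : Subgroup (Equiv.Perm V)) : Prop :=
  ∃ N M : Subgroup (Equiv.Perm V), NormalIn N G ∧ NormalIn M G ∧
    IsoCycle (quotientGraph Γ N) ∧ IsoCycle (quotientGraph Γ M) ∧
    ¬ IsoCycle (quotientGraph Γ (orbitKernel G N ⊓ orbitKernel G M))

/-- `(Γ, G)` is basic of independent-cycle type. -/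
def BasicOfIndependentCycleType (Γ : SimpleGraph V) (G : Subgroup (Equiv.Perm V)) : Prop :=
  IsBasic Γ G ∧ HasIndepCyclicQuotients Γ G

/-- Isomorphism of graph-group pairs: a graph isomorphism conjugating one group onto the other. -/
def PairIso (Γ : SimpleGraph V) (G : Subgroup (Equiv.Perm V))
    (Δ : SimpleGraph W) (H : Subgroup (Equiv.Perm W)) : Prop :=
  ∃ e : Γ ≃g Δ, ∀ h : Equiv.Perm W, h ∈ H ↔ ∃ g ∈ G, e.toEquiv.permCongr g = h

/-! ### Minimal normal subgroups -/

/-- `M` is a minimal normal subgroup of the ambient group. -/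
def IsMinimalNormal {G : Type*} [Group G] (M : Subgroup G) : Prop :=
  M.Normal ∧ M ≠ ⊥ ∧ ∀ N : Subgroup G, N.Normal → N ≤ M → N = ⊥ ∨ N = M

/-- `M` is a minimal normal subgroup of the subgroup `H`. -/
def IsMinimalNormalIn {G : Type*} [Group G] (M H : Subgroup G) : Prop :=
  NormalIn M H ∧ M ≠ ⊥ ∧ ∀ N : Subgroup G, NormalIn N H → N ≤ M → N = ⊥ ∨ N = M

/-! ### The graphs `Γ(r,s)` and their automorphisms -/

/-- In `Γ(r,s)`, the vertex `(i,j)` is joined to the four vertices `(i ± 1, j ± 1)`. -/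
def gammaRel (r s : ℕ) (x y : ZMod r × ZMod s) : Prop :=
  (y.1 = x.1 + 1 ∨ y.1 = x.1 - 1) ∧ (y.2 = x.2 + 1 ∨ y.2 = x.2 - 1)

/-- The graph `Γ(r,s)` on `ℤ_r × ℤ_s`. -/
def Gamma (r s : ℕ) : SimpleGraph (ZMod r × ZMod s) := SimpleGraph.fromRel (gammaRel r s)

/-- `μ : (i,j) ↦ (i+1, j)`. -/
def mu (r s : ℕ) : Equiv.Perm (ZMod r × ZMod s) :=
  (Equiv.addRight (1 : ZMod r)).prodCongr (Equiv.refl (ZMod s))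

/-- `ν : (i,j) ↦ (i, j+1)`. -/
def nu (r s : ℕ) : Equiv.Perm (ZMod r × ZMod s) :=
  (Equiv.refl (ZMod r)).prodCongr (Equiv.addRight (1 : ZMod s))

/-- `σ : (i,j) ↦ (-i, j)`. -/
def sigma (r s : ℕ) : Equiv.Perm (ZMod r × ZMod s) :=
  (Equiv.neg (ZMod r)).prodCongr (Equiv.refl (ZMod s))

/-- `τ : (i,j) ↦ (-i, -j)`. -/
def tau (r s : ℕ) : Equiv.Perm (ZMod r × ZMod s) :=
  (Equiv.neg (ZMod r)).prodCongr (Equiv.neg (ZMod s))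

/-- `σν : (i,j) ↦ (-i, j+1)`. -/
def sigmaNu (r s : ℕ) : Equiv.Perm (ZMod r × ZMod s) :=
  (Equiv.neg (ZMod r)).prodCongr (Equiv.addRight (1 : ZMod s))

/-- `μν : (i,j) ↦ (i+1, j+1)`. -/
def muNu (r s : ℕ) : Equiv.Perm (ZMod r × ZMod s) :=
  (Equiv.addRight (1 : ZMod r)).prodCongr (Equiv.addRight (1 : ZMod s))

/-- `σμν : (i,j) ↦ (-(i+1), j+1)`. -/
def sigmaMuNu (r s : ℕ) : Equiv.Perm (ZMod r × ZMod s) :=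
  ((Equiv.addRight (1 : ZMod r)).trans (Equiv.neg (ZMod r))).prodCongr
    (Equiv.addRight (1 : ZMod s))

/-- `μ² : (i,j) ↦ (i+2, j)`. -/
def muSq (r s : ℕ) : Equiv.Perm (ZMod r × ZMod s) :=
  (Equiv.addRight (2 : ZMod r)).prodCongr (Equiv.refl (ZMod s))

/-- `ν² : (i,j) ↦ (i, j+2)`. -/
def nuSq (r s : ℕ) : Equiv.Perm (ZMod r × ZMod s) :=
  (Equiv.refl (ZMod r)).prodCongr (Equiv.addRight (2 : ZMod s))

/-- `μ^k : (i,j) ↦ (i+k, j)`. -/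
def muPow (r s k : ℕ) : Equiv.Perm (ZMod r × ZMod s) :=
  (Equiv.addRight ((k : ZMod r))).prodCongr (Equiv.refl (ZMod s))

/-- `μ^k ν² : (i,j) ↦ (i+k, j+2)`. -/
def muPowNuSq (r s k : ℕ) : Equiv.Perm (ZMod r × ZMod s) :=
  (Equiv.addRight ((k : ZMod r))).prodCongr (Equiv.addRight (2 : ZMod s))

/-- `G(r,s) = ⟨μ, ν, σ⟩`. -/
def Ggroup (r s : ℕ) : Subgroup (Equiv.Perm (ZMod r × ZMod s)) :=
  Subgroup.closure {mu r s, nu r s, sigma r s}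

/-- `H(r,s) = ⟨μ, σν, τ⟩`. -/
def Hgroup (r s : ℕ) : Subgroup (Equiv.Perm (ZMod r × ZMod s)) :=
  Subgroup.closure {mu r s, sigmaNu r s, tau r s}

/-! ### The graphs `Γ⁺(r,s)` (for `r`, `s` even) -/

/-- `X⁺`: the set of `(i,j)` with `i` and `j` of the same parity. -/
def XPlus (r s : ℕ) : Set (ZMod r × ZMod s) := {x | x.1.val % 2 = x.2.val % 2}

/-- `Γ⁺(r,s)`, the subgraph of `Γ(r,s)` induced on `X⁺`. -/
def GammaPlus (r s : ℕ) : SimpleGraph (XPlus r s) :=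
  SimpleGraph.induce (XPlus r s) (Gamma r s)

section parity

lemma val_add_one_mod_two (r : ℕ) (hr : 2 ∣ r) (hr0 : r ≠ 0) (i : ZMod r) :
    (i + 1).val % 2 = (i.val + 1) % 2 := by
  haveI : NeZero r := ⟨hr0⟩
  haveI : Fact (1 < r) := ⟨by have := Nat.le_of_dvd (Nat.pos_of_ne_zero hr0) hr; omega⟩
  rw [ZMod.val_add, Nat.mod_mod_of_dvd _ hr, ZMod.val_one]

lemma val_add_two_mod_two (r : ℕ) (hr : 2 ∣ r) (hr0 : r ≠ 0) (i : ZMod r) :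
    (i + 2).val % 2 = i.val % 2 := by
  have h1 := val_add_one_mod_two r hr hr0 i
  have h2 := val_add_one_mod_two r hr hr0 (i + 1)
  rw [show i + 1 + 1 = i + 2 by ring] at h2
  omega

lemma val_neg_mod_two (r : ℕ) (hr : 2 ∣ r) (hr0 : r ≠ 0) (i : ZMod r) :
    (-i).val % 2 = i.val % 2 := by
  haveI : NeZero r := ⟨hr0⟩
  rcases eq_or_ne i 0 with h | h
  · simp [h]
  · have h1 : (-i).val = r - i.val := by rw [ZMod.neg_val]; simp [h]
    have h2 : i.val < r := ZMod.val_lt i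
    have h3 : i.val ≠ 0 := fun hh => h ((ZMod.val_eq_zero i).mp hh)
    obtain ⟨t, rfl⟩ := hr
    rw [h1]
    omega

end parity

section plusPerms

variable (r s : ℕ)

/-- The restriction of `μ²` to `X⁺`. -/
def muSqP (hr : 2 ∣ r) (hr0 : r ≠ 0) : Equiv.Perm (XPlus r s) :=
  (muSq r s).subtypePerm (by
    intro x
    have h := val_add_two_mod_two r hr hr0 x.1
    simp only [XPlus, Set.mem_setOf_eq, muSq, Equiv.prodCongr_apply, Prod.map,
      Equiv.coe_addRight, Equiv.refl_apply]
    omega)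

/-- The restriction of `ν²` to `X⁺`. -/
def nuSqP (hs : 2 ∣ s) (hs0 : s ≠ 0) : Equiv.Perm (XPlus r s) :=
  (nuSq r s).subtypePerm (by
    intro x
    have h := val_add_two_mod_two s hs hs0 x.2
    simp only [XPlus, Set.mem_setOf_eq, nuSq, Equiv.prodCongr_apply, Prod.map,
      Equiv.coe_addRight, Equiv.refl_apply]
    omega)

/-- The restriction of `μν` to `X⁺`. -/
def muNuP (hr : 2 ∣ r) (hr0 : r ≠ 0) (hs : 2 ∣ s) (hs0 : s ≠ 0) : Equiv.Perm (XPlus r s) :=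
  (muNu r s).subtypePerm (by
    intro x
    have h1 := val_add_one_mod_two r hr hr0 x.1
    have h2 := val_add_one_mod_two s hs hs0 x.2
    simp only [XPlus, Set.mem_setOf_eq, muNu, Equiv.prodCongr_apply, Prod.map,
      Equiv.coe_addRight]
    omega)

/-- The restriction of `σ` to `X⁺`. -/
def sigmaP (hr : 2 ∣ r) (hr0 : r ≠ 0) : Equiv.Perm (XPlus r s) :=
  (sigma r s).subtypePerm (by
    intro x
    have h := val_neg_mod_two r hr hr0 x.1
    simp only [XPlus, Set.mem_setOf_eq, sigma, Equiv.prodCongr_apply, Prod.map,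
      Equiv.neg_apply, Equiv.refl_apply]
    omega)

/-- The restriction of `τ` to `X⁺`. -/
def tauP (hr : 2 ∣ r) (hr0 : r ≠ 0) (hs : 2 ∣ s) (hs0 : s ≠ 0) : Equiv.Perm (XPlus r s) :=
  (tau r s).subtypePerm (by
    intro x
    have h1 := val_neg_mod_two r hr hr0 x.1
    have h2 := val_neg_mod_two s hs hs0 x.2
    simp only [XPlus, Set.mem_setOf_eq, tau, Equiv.prodCongr_apply, Prod.map,
      Equiv.neg_apply]
    omega)

/-- The restriction of `σμν` to `X⁺`. -/
def sigmaMuNuP (hr : 2 ∣ r) (hr0 : r ≠ 0) (hs : 2 ∣ s) (hs0 : s ≠ 0) :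
    Equiv.Perm (XPlus r s) :=
  (sigmaMuNu r s).subtypePerm (by
    intro x
    have h1 := val_neg_mod_two r hr hr0 (x.1 + 1)
    have h2 := val_add_one_mod_two r hr hr0 x.1
    have h3 := val_add_one_mod_two s hs hs0 x.2
    simp only [XPlus, Set.mem_setOf_eq, sigmaMuNu, Equiv.prodCongr_apply, Prod.map,
      Equiv.trans_apply, Equiv.coe_addRight, Equiv.neg_apply]
    omega)

/-- `G⁺(r,s) = ⟨μ², μν, σ⟩` acting on `X⁺`. -/
def GPlusGroup (hr : 2 ∣ r) (hr0 : r ≠ 0) (hs : 2 ∣ s) (hs0 : s ≠ 0) :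
    Subgroup (Equiv.Perm (XPlus r s)) :=
  Subgroup.closure {muSqP r s hr hr0, muNuP r s hr hr0 hs hs0, sigmaP r s hr hr0}

/-- `H⁺(r,s) = ⟨μ², σμν, τ⟩` acting on `X⁺`. -/
def HPlusGroup (hr : 2 ∣ r) (hr0 : r ≠ 0) (hs : 2 ∣ s) (hs0 : s ≠ 0) :
    Subgroup (Equiv.Perm (XPlus r s)) :=
  Subgroup.closure
    {muSqP r s hr hr0, sigmaMuNuP r s hr hr0 hs hs0, tauP r s hr hr0 hs hs0}

end plusPerms

/-! ### The standard double cover `Γ₂(r,s)` -/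

/-- Adjacency of the double cover: `(i,j)_δ ~ (i ± 1, j ± 1)_{δ+1}`. -/
def gamma2Rel (r s : ℕ) (x y : (ZMod r × ZMod s) × ZMod 2) : Prop :=
  (y.1.1 = x.1.1 + 1 ∨ y.1.1 = x.1.1 - 1) ∧ (y.1.2 = x.1.2 + 1 ∨ y.1.2 = x.1.2 - 1) ∧
    y.2 = x.2 + 1

/-- `Γ₂(r,s)`, the standard double cover of `Γ(r,s)`. -/
def Gamma2 (r s : ℕ) : SimpleGraph ((ZMod r × ZMod s) × ZMod 2) :=
  SimpleGraph.fromRel (gamma2Rel r s)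

/-- `μ : (i,j)_δ ↦ (i+1, j)_δ` on the double cover. -/
def muD (r s : ℕ) : Equiv.Perm ((ZMod r × ZMod s) × ZMod 2) :=
  (mu r s).prodCongr (Equiv.refl (ZMod 2))

/-- `ν : (i,j)_δ ↦ (i, j+1)_δ` on the double cover. -/
def nuD (r s : ℕ) : Equiv.Perm ((ZMod r × ZMod s) × ZMod 2) :=
  (nu r s).prodCongr (Equiv.refl (ZMod 2))

/-- `σ : (i,j)_δ ↦ (i, -j)_{δ+1}` on the double cover. -/
def sigmaD (r s : ℕ) : Equiv.Perm ((ZMod r × ZMod s) × ZMod 2) :=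
  ((Equiv.refl (ZMod r)).prodCongr (Equiv.neg (ZMod s))).prodCongr
    (Equiv.addRight (1 : ZMod 2))

/-- `τ : (i,j)_δ ↦ (-i, -j)_δ` on the double cover. -/
def tauD (r s : ℕ) : Equiv.Perm ((ZMod r × ZMod s) × ZMod 2) :=
  (tau r s).prodCongr (Equiv.refl (ZMod 2))

/-- `G₂(r,s) = ⟨μ, ν, σ, τ⟩` on the double cover. -/
def G2group (r s : ℕ) : Subgroup (Equiv.Perm ((ZMod r × ZMod s) × ZMod 2)) :=
  Subgroup.closure {muD r s, nuD r s, sigmaD r s, tauD r s}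

/-!
Every element of `G⁺` acts as `(i, j) ↦ (±i, j) + t`. Let `L` be a nontrivial normal subgroup.
If `L` contains a reflection `g`, then `μ² = [μν, g] ∈ L`. Whenever `μ² ∈ L`, the `L`-orbits are
the fibres of `j` modulo the group of shifts of `j` realised in `L`, which is the kernel of
`ℤ_s → ℤ_m` for some `m ∣ s`; so `Γ⁺_L` is `C_m`, or has at most two vertices. The same holds
with the coordinates exchanged when `ν² ∈ L` and `L` consists of translations. Otherwise the
translation vectors `T` of `L` are `σ`-stable, so `(2a, 0), (0, 2b) ∈ T` for `(a, b) ∈ T`; as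
`2ℤ_{2p}` has prime order, this forces `2a = 2b = 0`. For `(4,4)` this leaves
`T ⊆ {0, (2, 2)}`, whose quotient is `C_4`; for `(4,2p)` and `(2p,4)` the parity condition
defining `X⁺` kills `T`, contradicting `L ≠ ⊥`.
-/

section Arithmetic

theorem exists_dvd_mem_iff_castHom_eq_zero {n : ℕ} (B : AddSubgroup (ZMod n)) :
    ∃ m, ∃ h : m ∣ n, ∀ b, b ∈ B ↔ ZMod.castHom h (ZMod m) b = 0 := by
  obtain ⟨d, hd⟩ := Int.subgroup_cyclic (B.comap (Int.castAddHom (ZMod n)))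
  have hmem : ∀ z : ℤ, (z : ZMod n) ∈ B ↔ d ∣ z := fun z => by
    rw [← Int.mem_zmultiples_iff, AddSubgroup.zmultiples_eq_closure, ← hd]
    rfl
  refine ⟨d.natAbs, Int.natAbs_dvd_natAbs.2 ((hmem n).1 (by simp)), fun b => ?_⟩
  rw [ZMod.castHom_apply, ← ZMod.intCast_cast, ZMod.intCast_zmod_eq_zero_iff_dvd,
    Int.natCast_natAbs, abs_dvd, ← hmem, ZMod.intCast_zmod_cast]

theorem exists_nsmul_two_mul_eq_two {p : ℕ} (hp : p.Prime) {a : ZMod (2 * p)} (ha : 2 * a ≠ 0) :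
    ∃ k : ℕ, k • (2 * a) = 2 := by
  have : NeZero (2 * p) := ⟨by have := hp.pos; omega⟩
  have : Fact p.Prime := ⟨hp⟩
  have hpa : (a.val : ZMod p) ≠ 0 := by
    rw [Ne, ZMod.natCast_eq_zero_iff]
    rintro ⟨c, hc⟩
    apply ha
    have h := ZMod.natCast_self (2 * p)
    rw [← ZMod.natCast_zmod_val a, hc]
    push_cast at h ⊢
    rw [← mul_assoc, h, zero_mul]
  refine ⟨((a.val : ZMod p)⁻¹).val, ?_⟩
  have hk : a.val * ((a.val : ZMod p)⁻¹).val ≡ 1 [MOD p] := by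
    rw [← ZMod.natCast_eq_natCast_iff, Nat.cast_mul, ZMod.natCast_zmod_val, Nat.cast_one,
      mul_inv_cancel₀ hpa]
  have h2 := (ZMod.natCast_eq_natCast_iff _ _ _).2 (hk.mul_left' 2)
  push_cast [ZMod.natCast_zmod_val] at h2
  rw [nsmul_eq_mul]
  linear_combination h2

theorem eq_zero_of_two_mul_eq_zero {p : ℕ} (hp : Odd p) {b : ZMod (2 * p)} (h2 : 2 * b = 0)
    (hb : ZMod.castHom (dvd_mul_right 2 p) (ZMod 2) b = 0) : b = 0 := by
  have : NeZero (2 * p) := ⟨by have := hp.pos; omega⟩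
  rw [ZMod.castHom_apply, ZMod.cast_eq_val, ZMod.natCast_eq_zero_iff] at hb
  replace h2 : ((2 * b.val : ℕ) : ZMod (2 * p)) = 0 := by
    push_cast [ZMod.natCast_zmod_val]
    exact h2
  rw [ZMod.natCast_eq_zero_iff] at h2
  rw [← ZMod.val_eq_zero]
  refine Nat.eq_zero_of_dvd_of_lt ?_ (ZMod.val_lt b)
  exact (Nat.coprime_two_left.2 hp).mul_dvd_of_dvd_of_dvd hb
    (Nat.dvd_of_mul_dvd_mul_left two_pos h2)

end Arithmetic

section NormalQuotient

variable {V : Type*} {L : Subgroup (Equiv.Perm V)}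

theorem mk_eq_mk_iff {x y : V} :
    Quotient.mk (orbitSetoid L) x = Quotient.mk (orbitSetoid L) y ↔ ∃ g ∈ L, g y = x := by
  rw [Quotient.eq, orbitSetoid, MulAction.orbitRel_apply, MulAction.mem_orbit_iff]
  exact ⟨fun ⟨g, hg⟩ => ⟨g, g.2, hg⟩, fun ⟨g, hg, hgy⟩ => ⟨⟨g, hg⟩, hgy⟩⟩

theorem mk_apply_eq_mk {g : Equiv.Perm V} (hg : g ∈ L) (x : V) :
    Quotient.mk (orbitSetoid L) (g x) = Quotient.mk (orbitSetoid L) x :=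
  mk_eq_mk_iff.2 ⟨g, hg, rfl⟩

end NormalQuotient

section Shifts

variable {V A : Type*} [AddCommGroup A]

def IsShiftBy (p : V → A) (g : Equiv.Perm V) (a : A) : Prop := ∀ x, p (g x) = p x + a

variable {p : V → A} {g h : Equiv.Perm V} {a b : A}

theorem isShiftBy_one : IsShiftBy p 1 0 := fun x => by simp

theorem IsShiftBy.mul (hg : IsShiftBy p g a) (hh : IsShiftBy p h b) :
    IsShiftBy p (g * h) (a + b) := fun x => by
  rw [Equiv.Perm.mul_apply, hg, hh, add_right_comm, add_assoc]

theorem IsShiftBy.inv (hg : IsShiftBy p g a) : IsShiftBy p g⁻¹ (-a) := fun x => by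
  rw [eq_add_neg_iff_add_eq, ← hg]; simp

theorem IsShiftBy.pow (hg : IsShiftBy p g a) (k : ℕ) : IsShiftBy p (g ^ k) (k • a) := by
  induction k with
  | zero => simpa using isShiftBy_one
  | succ k ih => simpa [pow_succ, succ_nsmul] using ih.mul hg

theorem IsShiftBy.zpow (hg : IsShiftBy p g a) (k : ℤ) : IsShiftBy p (g ^ k) (k • a) := by
  cases k with
  | ofNat k => simpa using hg.pow k
  | negSucc k => simpa [zpow_negSucc, negSucc_zsmul] using (hg.pow (k + 1)).inv

theorem IsShiftBy.eq (hp : Function.Injective p) (hg : IsShiftBy p g a) (hh : IsShiftBy p h a) :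
    g = h :=
  Equiv.ext fun x => hp ((hg x).trans (hh x).symm)

def shiftSubgroup (L : Subgroup (Equiv.Perm V)) (p : V → A) : AddSubgroup A where
  carrier := {a | ∃ g ∈ L, IsShiftBy p g a}
  add_mem' := fun ⟨g, hg, ha⟩ ⟨h, hh, hb⟩ => ⟨g * h, L.mul_mem hg hh, ha.mul hb⟩
  zero_mem' := ⟨1, L.one_mem, isShiftBy_one⟩
  neg_mem' := fun ⟨g, hg, ha⟩ => ⟨g⁻¹, L.inv_mem hg, ha.inv⟩

end Shifts

section CycleLabelling

variable {V : Type*} {m : ℕ}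

structure IsCycleLabelling (Γ : SimpleGraph V) (F : V → ZMod m) : Prop where
  adj : ∀ {x y}, Γ.Adj x y → F y = F x + 1 ∨ F y = F x - 1
  exists_adj : ∀ x, ∃ y, Γ.Adj x y ∧ F y = F x + 1
  surjective : Function.Surjective F

variable {Γ : SimpleGraph V} {F : V → ZMod m} {L : Subgroup (Equiv.Perm V)}

theorem IsCycleLabelling.comp_castHom (hF : IsCycleLabelling Γ F) {k : ℕ} (h : k ∣ m) :
    IsCycleLabelling Γ (ZMod.castHom h (ZMod k) ∘ F) where
  adj hxy := (hF.adj hxy).imp (fun e => by simp only [Function.comp_apply, e, map_add, map_one])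
    (fun e => by simp only [Function.comp_apply, e, map_sub, map_one])
  exists_adj x := (hF.exists_adj x).imp fun y ⟨hxy, e⟩ =>
    ⟨hxy, by simp only [Function.comp_apply, e, map_add, map_one]⟩
  surjective := (ZMod.castHom_surjective h).comp hF.surjective

noncomputable def orbitEquivOfFibres (F : V → ZMod m)
    (hF : ∀ x y, F x = F y ↔ Quotient.mk (orbitSetoid L) x = Quotient.mk (orbitSetoid L) y)
    (hsurj : Function.Surjective F) : Quotient (orbitSetoid L) ≃ ZMod m :=
  Equiv.ofBijective (Quotient.lift F fun x y h => (hF x y).2 (Quotient.sound h))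
    ⟨fun A B => Quotient.inductionOn₂ A B fun x y h => (hF x y).1 h,
      fun q => let ⟨x, hx⟩ := hsurj q; ⟨Quotient.mk _ x, hx⟩⟩

theorem IsCycleLabelling.card_eq (hFc : IsCycleLabelling Γ F)
    (hF : ∀ x y, F x = F y ↔ Quotient.mk (orbitSetoid L) x = Quotient.mk (orbitSetoid L) y) :
    Nat.card (Quotient (orbitSetoid L)) = m := by
  rw [Nat.card_congr (orbitEquivOfFibres F hF hFc.surjective), Nat.card_zmod]

theorem IsCycleLabelling.quotientGraph_adj_mk_iff (hFc : IsCycleLabelling Γ F) (hm : 2 ≤ m)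
    (hF : ∀ x y, F x = F y ↔ Quotient.mk (orbitSetoid L) x = Quotient.mk (orbitSetoid L) y)
    (x y : V) :
    (quotientGraph Γ L).Adj (Quotient.mk _ x) (Quotient.mk _ y) ↔
      F x - F y = 1 ∨ F y - F x = 1 := by
  have step : ∀ {x y}, Γ.Adj x y → F x - F y = 1 ∨ F y - F x = 1 := fun h =>
    (hFc.adj h).elim (fun e => Or.inr (by rw [e, add_sub_cancel_left]))
      (fun e => Or.inl (by rw [e, sub_sub_cancel]))
  rw [quotientGraph, SimpleGraph.fromRel_adj]
  constructor
  · rintro ⟨-, ⟨x', y', hx, hy, h⟩ | ⟨y', x', hy, hx, h⟩⟩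
    · rw [← (hF _ _).2 hx, ← (hF _ _).2 hy]
      exact step h
    · rw [← (hF _ _).2 hx, ← (hF _ _).2 hy]
      exact (step h).symm
  · intro h
    refine ⟨fun hxy => ?_, ?_⟩
    · have : Fact (1 < m) := ⟨hm⟩
      rw [← (hF x y).2 hxy, sub_self, or_self] at h
      exact zero_ne_one h
    rcases h with h | h
    · obtain ⟨z, hyz, hz⟩ := hFc.exists_adj y
      exact Or.inr ⟨y, z, rfl, (hF z x).1 (by rw [hz, ← h, add_sub_cancel]), hyz⟩
    · obtain ⟨z, hxz, hz⟩ := hFc.exists_adj x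
      exact Or.inl ⟨x, z, rfl, (hF z y).1 (by rw [hz, ← h, add_sub_cancel]), hxz⟩

theorem IsCycleLabelling.nonempty_iso (hFc : IsCycleLabelling Γ F) (hm : 2 ≤ m)
    (hF : ∀ x y, F x = F y ↔ Quotient.mk (orbitSetoid L) x = Quotient.mk (orbitSetoid L) y) :
    Nonempty (quotientGraph Γ L ≃g SimpleGraph.cycleGraph m) := by
  obtain ⟨n, rfl⟩ : ∃ n, m = n + 2 := ⟨m - 2, by omega⟩
  -- `ZMod (n + 2)` is `Fin (n + 2)`, and `cycleGraph (n + 2)` is adjacency by `± 1` there.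
  exact ⟨⟨(orbitEquivOfFibres F hF hFc.surjective).trans (Equiv.refl _), fun {A B} =>
    Quotient.inductionOn₂ A B fun x y => (hFc.quotientGraph_adj_mk_iff hm hF x y).symm⟩⟩

theorem IsCycleLabelling.card_le_two_or_isoCycle {n : ℕ} {p : V → ZMod n}
    (hp : IsCycleLabelling Γ p)
    (hshift : ∀ g ∈ L, ∃ b, IsShiftBy p g b)
    (hfib : ∀ x y, p x = p y → Quotient.mk (orbitSetoid L) x = Quotient.mk (orbitSetoid L) y) :
    Nat.card (Quotient (orbitSetoid L)) ≤ 2 ∨ IsoCycle (quotientGraph Γ L) := by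
  obtain ⟨m, hmn, hker⟩ := exists_dvd_mem_iff_castHom_eq_zero (shiftSubgroup L p)
  have hF : ∀ x y, (ZMod.castHom hmn (ZMod m) ∘ p) x = (ZMod.castHom hmn (ZMod m) ∘ p) y ↔
      Quotient.mk (orbitSetoid L) x = Quotient.mk (orbitSetoid L) y := by
    intro x y
    rw [Function.comp_apply, Function.comp_apply, ← sub_eq_zero, ← map_sub, ← hker]
    constructor
    · rintro ⟨g, hg, hgxy⟩
      rw [← mk_apply_eq_mk hg y]
      exact hfib _ _ (by rw [hgxy, add_sub_cancel])
    · intro hxy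
      obtain ⟨g, hg, rfl⟩ := mk_eq_mk_iff.1 hxy
      obtain ⟨b, hb⟩ := hshift g hg
      rw [hb, add_sub_cancel_left]
      exact ⟨g, hg, hb⟩
  rcases le_or_gt m 2 with hm | hm
  · exact Or.inl (((hp.comp_castHom hmn).card_eq hF).trans_le hm)
  · exact Or.inr ⟨m, hm, (hp.comp_castHom hmn).nonempty_iso (by omega) hF⟩

end CycleLabelling

section XPlus

variable {r s : ℕ}

theorem mem_XPlus_iff [NeZero r] [NeZero s] (hr : 2 ∣ r) (hs : 2 ∣ s) {v : ZMod r × ZMod s} :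
    v ∈ XPlus r s ↔ ZMod.castHom hr (ZMod 2) v.1 = ZMod.castHom hs (ZMod 2) v.2 := by
  rw [ZMod.castHom_apply, ZMod.castHom_apply, ZMod.cast_eq_val, ZMod.cast_eq_val,
    ZMod.natCast_eq_natCast_iff']
  rfl

theorem zero_mem_XPlus : (0 : ZMod r × ZMod s) ∈ XPlus r s := by
  simp [XPlus]

theorem add_mem_XPlus_iff [NeZero r] [NeZero s] (hr : 2 ∣ r) (hs : 2 ∣ s)
    {v t : ZMod r × ZMod s} (hv : v ∈ XPlus r s) :
    v + t ∈ XPlus r s ↔ ZMod.castHom hr (ZMod 2) t.1 = ZMod.castHom hs (ZMod 2) t.2 := by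
  rw [mem_XPlus_iff hr hs] at hv ⊢
  simp only [Prod.fst_add, Prod.snd_add, map_add, hv, add_right_inj]

theorem gammaRel_symm {x y : ZMod r × ZMod s} (h : gammaRel r s x y) : gammaRel r s y x := by
  obtain ⟨h1 | h1, h2 | h2⟩ := h <;> simp [gammaRel, h1, h2]

theorem gammaRel_of_adj {x y : XPlus r s} (h : (GammaPlus r s).Adj x y) :
    gammaRel r s x y :=
  h.2.elim id gammaRel_symm

theorem gammaPlus_adj_add_one_one [NeZero r] (hr : 2 ∣ r) {x y : XPlus r s}
    (h : (y : ZMod r × ZMod s) = (x : ZMod r × ZMod s) + (1, 1)) : (GammaPlus r s).Adj x y := by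
  have : Fact (1 < r) := ⟨by have := Nat.le_of_dvd (Nat.pos_of_ne_zero (NeZero.ne r)) hr; omega⟩
  refine ⟨fun hxy => ?_, Or.inl ⟨Or.inl (congrArg Prod.fst h), Or.inl (congrArg Prod.snd h)⟩⟩
  change (x : ZMod r × ZMod s) = y at hxy
  simpa [← hxy] using congrArg Prod.fst h

theorem isCycleLabelling_fst [NeZero r] [NeZero s] (hr : 2 ∣ r) (hs : 2 ∣ s) :
    IsCycleLabelling (GammaPlus r s) fun x => (x : ZMod r × ZMod s).1 where
  adj h := (gammaRel_of_adj h).1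
  exists_adj x := ⟨⟨(x : ZMod r × ZMod s) + (1, 1),
    (add_mem_XPlus_iff hr hs x.2).2 (by simp only [map_one])⟩,
    gammaPlus_adj_add_one_one hr rfl, rfl⟩
  surjective q := ⟨⟨(q, (q.val : ZMod s)), by
    show _ = _; rw [ZMod.val_natCast, Nat.mod_mod_of_dvd _ hs]⟩, rfl⟩

theorem isCycleLabelling_snd [NeZero r] [NeZero s] (hr : 2 ∣ r) (hs : 2 ∣ s) :
    IsCycleLabelling (GammaPlus r s) fun x => (x : ZMod r × ZMod s).2 where
  adj h := (gammaRel_of_adj h).2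
  exists_adj x := ⟨⟨(x : ZMod r × ZMod s) + (1, 1),
    (add_mem_XPlus_iff hr hs x.2).2 (by simp only [map_one])⟩,
    gammaPlus_adj_add_one_one hr rfl, rfl⟩
  surjective q := ⟨⟨((q.val : ZMod r), q), by
    show _ = _; rw [ZMod.val_natCast, Nat.mod_mod_of_dvd _ hr]⟩, rfl⟩

end XPlus

section Translations

variable {r s : ℕ}

theorem isShiftBy_muSqP (hr : 2 ∣ r) (hr0 : r ≠ 0) :
    IsShiftBy Subtype.val (muSqP r s hr hr0) (2, 0) :=
  fun _ => Prod.ext rfl (add_zero _).symm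

theorem isShiftBy_nuSqP (hs : 2 ∣ s) (hs0 : s ≠ 0) :
    IsShiftBy Subtype.val (nuSqP r s hs hs0) (0, 2) :=
  fun _ => Prod.ext (add_zero _).symm rfl

theorem isShiftBy_muNuP (hr : 2 ∣ r) (hr0 : r ≠ 0) (hs : 2 ∣ s) (hs0 : s ≠ 0) :
    IsShiftBy Subtype.val (muNuP r s hr hr0 hs hs0) (1, 1) :=
  fun _ => rfl

theorem sigmaP_apply (hr : 2 ∣ r) (hr0 : r ≠ 0) (x : XPlus r s) :
    (sigmaP r s hr hr0 x : ZMod r × ZMod s) =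
      (-(x : ZMod r × ZMod s).1, (x : ZMod r × ZMod s).2) :=
  rfl

theorem IsShiftBy.castHom_fst_eq_castHom_snd [NeZero r] [NeZero s] (hr : 2 ∣ r) (hs : 2 ∣ s)
    {g : Equiv.Perm (XPlus r s)} {t : ZMod r × ZMod s} (hg : IsShiftBy Subtype.val g t) :
    ZMod.castHom hr (ZMod 2) t.1 = ZMod.castHom hs (ZMod 2) t.2 := by
  have h := (g ⟨0, zero_mem_XPlus⟩).2
  rw [hg] at h
  exact (add_mem_XPlus_iff hr hs zero_mem_XPlus).1 h

theorem exists_eq_natCast_mul_two [NeZero r] (hr : 2 ∣ r) {a : ZMod r}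
    (ha : ZMod.castHom hr (ZMod 2) a = 0) : ∃ k : ℕ, a = k * 2 := by
  rw [ZMod.castHom_apply, ZMod.cast_eq_val, ZMod.natCast_eq_zero_iff] at ha
  obtain ⟨k, hk⟩ := ha
  exact ⟨k, by rw [← ZMod.natCast_zmod_val a, hk]; push_cast; ring⟩

variable {L : Subgroup (Equiv.Perm (XPlus r s))}

theorem mk_eq_mk_of_snd_eq [NeZero s] (hr : 2 ∣ r) (hr0 : r ≠ 0) (hs : 2 ∣ s)
    (hμ : muSqP r s hr hr0 ∈ L) {x y : XPlus r s}
    (h : (x : ZMod r × ZMod s).2 = (y : ZMod r × ZMod s).2) :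
    Quotient.mk (orbitSetoid L) x = Quotient.mk (orbitSetoid L) y := by
  have : NeZero r := ⟨hr0⟩
  obtain ⟨k, hk⟩ := exists_eq_natCast_mul_two hr
    (a := (x : ZMod r × ZMod s).1 - (y : ZMod r × ZMod s).1)
    (by rw [map_sub, (mem_XPlus_iff hr hs).1 x.2, (mem_XPlus_iff hr hs).1 y.2, h, sub_self])
  have hxy : (muSqP r s hr hr0 ^ k) y = x := by
    refine Subtype.ext ((isShiftBy_muSqP hr hr0).pow k y |>.trans (Prod.ext ?_ ?_))
    · simp [← hk]
    · simp [h]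
  rw [← hxy]
  exact mk_apply_eq_mk (L.pow_mem hμ k) y

theorem mk_eq_mk_of_fst_eq [NeZero r] (hr : 2 ∣ r) (hs : 2 ∣ s) (hs0 : s ≠ 0)
    (hν : nuSqP r s hs hs0 ∈ L) {x y : XPlus r s}
    (h : (x : ZMod r × ZMod s).1 = (y : ZMod r × ZMod s).1) :
    Quotient.mk (orbitSetoid L) x = Quotient.mk (orbitSetoid L) y := by
  have : NeZero s := ⟨hs0⟩
  obtain ⟨k, hk⟩ := exists_eq_natCast_mul_two hs
    (a := (x : ZMod r × ZMod s).2 - (y : ZMod r × ZMod s).2)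
    (by rw [map_sub, ← (mem_XPlus_iff hr hs).1 x.2, ← (mem_XPlus_iff hr hs).1 y.2, h, sub_self])
  have hxy : (nuSqP r s hs hs0 ^ k) y = x := by
    refine Subtype.ext ((isShiftBy_nuSqP hs hs0).pow k y |>.trans (Prod.ext ?_ ?_))
    · simp [h]
    · simp [← hk]
  rw [← hxy]
  exact mk_apply_eq_mk (L.pow_mem hν k) y

end Translations

theorem nonempty_iso_cycleGraph_nuSq {r s : ℕ} (hre : 2 ∣ r) (hr0 : r ≠ 0) (hse : 2 ∣ s)
    (hs0 : s ≠ 0) :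
    Nonempty (quotientGraph (GammaPlus r s) (Subgroup.closure {nuSqP r s hse hs0}) ≃g
      SimpleGraph.cycleGraph r) := by
  have : NeZero r := ⟨hr0⟩
  have : NeZero s := ⟨hs0⟩
  refine (isCycleLabelling_fst hre hse).nonempty_iso (Nat.le_of_dvd (by omega) hre) fun x y =>
    ⟨fun h => mk_eq_mk_of_fst_eq hre hse hs0 (Subgroup.subset_closure (Set.mem_singleton _)) h,
      fun hxy => ?_⟩
  obtain ⟨g, hg, rfl⟩ := mk_eq_mk_iff.1 hxy
  obtain ⟨k, rfl⟩ := Subgroup.mem_closure_singleton.1 hg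
  simpa using congrArg Prod.fst ((isShiftBy_nuSqP hse hs0).zpow k y)

theorem nonempty_iso_cycleGraph_muSq {r s : ℕ} (hre : 2 ∣ r) (hr0 : r ≠ 0) (hse : 2 ∣ s)
    (hs0 : s ≠ 0) :
    Nonempty (quotientGraph (GammaPlus r s) (Subgroup.closure {muSqP r s hre hr0}) ≃g
      SimpleGraph.cycleGraph s) := by
  have : NeZero r := ⟨hr0⟩
  have : NeZero s := ⟨hs0⟩
  refine (isCycleLabelling_snd hre hse).nonempty_iso (Nat.le_of_dvd (by omega) hse) fun x y =>
    ⟨fun h => mk_eq_mk_of_snd_eq hre hr0 hse (Subgroup.subset_closure (Set.mem_singleton _)) h,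
      fun hxy => ?_⟩
  obtain ⟨g, hg, rfl⟩ := mk_eq_mk_iff.1 hxy
  obtain ⟨k, rfl⟩ := Subgroup.mem_closure_singleton.1 hg
  simpa using congrArg Prod.snd ((isShiftBy_muSqP hre hr0).zpow k y)

def affineSubgroup (r s : ℕ) : Subgroup (Equiv.Perm (XPlus r s)) where
  carrier := {g | ∃ ε : ZMod r, (ε = 1 ∨ ε = -1) ∧ ∃ t : ZMod r × ZMod s, ∀ x,
    (g x : ZMod r × ZMod s) = (ε * (x : ZMod r × ZMod s).1, (x : ZMod r × ZMod s).2) + t}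
  mul_mem' := by
    rintro g h ⟨ε, hε, t, hg⟩ ⟨δ, hδ, u, hh⟩
    refine ⟨ε * δ, by rcases hε with rfl | rfl <;> rcases hδ with rfl | rfl <;> simp,
      (ε * u.1 + t.1, u.2 + t.2), fun x => ?_⟩
    rw [Equiv.Perm.mul_apply, hg, hh]
    ext <;> simp <;> ring
  one_mem' := ⟨1, Or.inl rfl, 0, fun x => by simp⟩
  inv_mem' := by
    rintro g ⟨ε, hε, t, hg⟩
    have hεε : ε * ε = 1 := by rcases hε with rfl | rfl <;> simp
    refine ⟨ε, hε, (-(ε * t.1), -t.2), fun x => ?_⟩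
    obtain ⟨h1, h2⟩ := Prod.ext_iff.1 (hg (g⁻¹ x))
    rw [show g (g⁻¹ x) = x by simp] at h1 h2
    simp only [Prod.fst_add, Prod.snd_add] at h1 h2
    ext
    · simp only [Prod.fst_add]
      linear_combination (-ε) * h1 - ((g⁻¹ x : XPlus r s) : ZMod r × ZMod s).1 * hεε
    · simp only [Prod.snd_add]
      linear_combination -h2

section Affine

variable {r s : ℕ}

theorem GPlusGroup_le_affineSubgroup (hre : 2 ∣ r) (hr0 : r ≠ 0) (hse : 2 ∣ s) (hs0 : s ≠ 0) :
    GPlusGroup r s hre hr0 hse hs0 ≤ affineSubgroup r s := by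
  rw [GPlusGroup, Subgroup.closure_le]
  rintro g (rfl | rfl | rfl)
  · exact ⟨1, Or.inl rfl, (2, 0), fun x => by rw [isShiftBy_muSqP]; simp⟩
  · exact ⟨1, Or.inl rfl, (1, 1), fun x => by rw [isShiftBy_muNuP]; simp⟩
  · exact ⟨-1, Or.inr rfl, 0, fun x => by rw [sigmaP_apply]; simp⟩

theorem exists_isShiftBy_snd_of_mem_affineSubgroup {g : Equiv.Perm (XPlus r s)}
    (hg : g ∈ affineSubgroup r s) :
    ∃ b, IsShiftBy (fun x : XPlus r s => (x : ZMod r × ZMod s).2) g b :=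
  let ⟨_, _, t, h⟩ := hg
  ⟨t.2, fun x => congrArg Prod.snd (h x)⟩

theorem commute_nuSqP_of_mem_affineSubgroup (hs : 2 ∣ s) (hs0 : s ≠ 0)
    {g : Equiv.Perm (XPlus r s)} (hg : g ∈ affineSubgroup r s) :
    Commute g (nuSqP r s hs hs0) := by
  obtain ⟨ε, -, t, h⟩ := hg
  refine Equiv.ext fun x => Subtype.ext ?_
  rw [Equiv.Perm.mul_apply, Equiv.Perm.mul_apply, h, isShiftBy_nuSqP, isShiftBy_nuSqP, h]
  ext <;> simp only [Prod.fst_add, Prod.snd_add] <;> ring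

end Affine

section NormalSubgroups

variable {r s : ℕ} {hre : 2 ∣ r} {hr0 : r ≠ 0} {hse : 2 ∣ s} {hs0 : s ≠ 0}
  {L : Subgroup (Equiv.Perm (XPlus r s))}

theorem muSqP_mem_of_reflection_mem (hL : NormalIn L (GPlusGroup r s hre hr0 hse hs0))
    {g : Equiv.Perm (XPlus r s)} (hg : g ∈ L) {t : ZMod r × ZMod s}
    (hgt : ∀ x, (g x : ZMod r × ZMod s) =
      (-(x : ZMod r × ZMod s).1, (x : ZMod r × ZMod s).2) + t) :
    muSqP r s hre hr0 ∈ L := by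
  have hcomm : muNuP r s hre hr0 hse hs0 * g =
      muSqP r s hre hr0 * (g * muNuP r s hre hr0 hse hs0) := by
    refine Equiv.ext fun x => Subtype.ext ?_
    simp only [Equiv.Perm.mul_apply]
    rw [isShiftBy_muNuP, hgt, isShiftBy_muSqP, hgt, isShiftBy_muNuP]
    ext <;> simp only [Prod.fst_add, Prod.snd_add] <;> ring
  have hμ : muSqP r s hre hr0 =
      muNuP r s hre hr0 hse hs0 * g * (muNuP r s hre hr0 hse hs0)⁻¹ * g⁻¹ := by
    rw [hcomm]; group
  rw [hμ]
  exact L.mul_mem (hL.2 _ (Subgroup.subset_closure (by simp)) g hg) (L.inv_mem hg)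

theorem exists_isShiftBy_of_muSqP_not_mem (hL : NormalIn L (GPlusGroup r s hre hr0 hse hs0))
    (hμ : muSqP r s hre hr0 ∉ L) {g : Equiv.Perm (XPlus r s)} (hg : g ∈ L) :
    ∃ t, IsShiftBy Subtype.val g t := by
  obtain ⟨ε, rfl | rfl, t, hgt⟩ := GPlusGroup_le_affineSubgroup hre hr0 hse hs0 (hL.1 hg)
  · exact ⟨t, fun x => by simp [hgt]⟩
  · exact absurd (muSqP_mem_of_reflection_mem hL hg (t := t) (by simpa using hgt)) hμ

theorem neg_fst_mem_shiftSubgroup (hL : NormalIn L (GPlusGroup r s hre hr0 hse hs0))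
    {t : ZMod r × ZMod s} (ht : t ∈ shiftSubgroup L Subtype.val) :
    (-t.1, t.2) ∈ shiftSubgroup L Subtype.val := by
  obtain ⟨g, hg, hgt⟩ := ht
  have hσ : (sigmaP r s hre hr0)⁻¹ = sigmaP r s hre hr0 :=
    inv_eq_of_mul_eq_one_right (Equiv.ext fun x => Subtype.ext (by simp [sigmaP_apply]))
  refine ⟨sigmaP r s hre hr0 * g * (sigmaP r s hre hr0)⁻¹,
    hL.2 _ (Subgroup.subset_closure (by simp)) g hg, fun x => ?_⟩
  rw [hσ, Equiv.Perm.mul_apply, Equiv.Perm.mul_apply, sigmaP_apply, hgt, sigmaP_apply]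
  ext <;> simp [add_comm]

theorem mem_of_isShiftBy_mem_shiftSubgroup {g : Equiv.Perm (XPlus r s)} {t : ZMod r × ZMod s}
    (hg : IsShiftBy Subtype.val g t) (ht : t ∈ shiftSubgroup L Subtype.val) : g ∈ L := by
  obtain ⟨h, hh, hht⟩ := ht
  rwa [hg.eq Subtype.val_injective hht]

theorem eq_bot_of_forall_mem_shiftSubgroup_eq_zero (htr : ∀ g ∈ L, ∃ t, IsShiftBy Subtype.val g t)
    (h : ∀ t ∈ shiftSubgroup L Subtype.val, t = 0) : L = ⊥ := by
  refine (Subgroup.eq_bot_iff_forall L).2 fun g hg => ?_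
  obtain ⟨t, ht⟩ := htr g hg
  obtain rfl := h t ⟨g, hg, ht⟩
  exact ht.eq Subtype.val_injective isShiftBy_one

end NormalSubgroups

section TranslationLattice

variable {r s : ℕ} {T : AddSubgroup (ZMod r × ZMod s)}

theorem two_mul_eq_zero_of_mem {p q : ℕ} (hp : p.Prime) (hq : q.Prime) (hr : r = 2 * p)
    (hs : s = 2 * q) (hT : ∀ t ∈ T, ((-t.1, t.2) : ZMod r × ZMod s) ∈ T)
    (h20 : ((2, 0) : ZMod r × ZMod s) ∉ T) (h02 : ((0, 2) : ZMod r × ZMod s) ∉ T)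
    {t : ZMod r × ZMod s} (ht : t ∈ T) : 2 * t.1 = 0 ∧ 2 * t.2 = 0 := by
  subst hr hs
  have h1 : ((2 * t.1, 0) : ZMod (2 * p) × ZMod (2 * q)) ∈ T := by
    convert T.sub_mem ht (hT t ht) using 1
    ext <;> simp only [Prod.fst_sub, Prod.snd_sub] <;> ring
  have h2 : ((0, 2 * t.2) : ZMod (2 * p) × ZMod (2 * q)) ∈ T := by
    convert T.add_mem ht (hT t ht) using 1
    ext <;> simp only [Prod.fst_add, Prod.snd_add] <;> ring
  constructor
  · by_contra h
    obtain ⟨k, hk⟩ := exists_nsmul_two_mul_eq_two hp h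
    exact h20 (by simpa [hk] using T.nsmul_mem h1 k)
  · by_contra h
    obtain ⟨k, hk⟩ := exists_nsmul_two_mul_eq_two hq h
    exact h02 (by simpa [hk] using T.nsmul_mem h2 k)

theorem eq_zero_or_eq_two_two_of_mem {T : AddSubgroup (ZMod 4 × ZMod 4)}
    (hT : ∀ t ∈ T, ((-t.1, t.2) : ZMod 4 × ZMod 4) ∈ T)
    (h20 : ((2, 0) : ZMod 4 × ZMod 4) ∉ T) (h02 : ((0, 2) : ZMod 4 × ZMod 4) ∉ T)
    {t : ZMod 4 × ZMod 4} (ht : t ∈ T) : t = 0 ∨ t = (2, 2) := by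
  obtain ⟨h1, h2⟩ := two_mul_eq_zero_of_mem Nat.prime_two Nat.prime_two rfl rfl hT h20 h02 ht
  have key : ∀ a b : ZMod 4, 2 * a = 0 → 2 * b = 0 → (a, b) ≠ (2, 0) → (a, b) ≠ (0, 2) →
      (a, b) = 0 ∨ (a, b) = (2, 2) := by decide
  exact key t.1 t.2 h1 h2 (fun h => h20 (h ▸ ht)) (fun h => h02 (h ▸ ht))

theorem eq_zero_of_mem_of_four_two_mul {p : ℕ} (hodd : Odd p) (hp : p.Prime)
    {T : AddSubgroup (ZMod 4 × ZMod (2 * p))} (hr : 2 ∣ 4) (hs : 2 ∣ 2 * p)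
    (hT : ∀ t ∈ T, ((-t.1, t.2) : ZMod 4 × ZMod (2 * p)) ∈ T)
    (hpar : ∀ t ∈ T, ZMod.castHom hr (ZMod 2) t.1 = ZMod.castHom hs (ZMod 2) t.2)
    (h20 : ((2, 0) : ZMod 4 × ZMod (2 * p)) ∉ T) (h02 : ((0, 2) : ZMod 4 × ZMod (2 * p)) ∉ T)
    {t : ZMod 4 × ZMod (2 * p)} (ht : t ∈ T) : t = 0 := by
  obtain ⟨h1, h2⟩ := two_mul_eq_zero_of_mem Nat.prime_two hp rfl rfl hT h20 h02 ht
  have key : ∀ a : ZMod 4, 2 * a = 0 →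
      ZMod.castHom (dvd_mul_left 2 2) (ZMod 2) a = 0 ∧ (a ≠ 2 → a = 0) := by decide
  have hb : t.2 = 0 := eq_zero_of_two_mul_eq_zero hodd h2 ((hpar t ht).symm.trans (key _ h1).1)
  refine Prod.ext ((key _ h1).2 fun ha => h20 ?_) hb
  rwa [← Prod.mk.eta (p := t), ha, hb] at ht

theorem eq_zero_of_mem_of_two_mul_four {p : ℕ} (hodd : Odd p) (hp : p.Prime)
    {T : AddSubgroup (ZMod (2 * p) × ZMod 4)} (hr : 2 ∣ 2 * p) (hs : 2 ∣ 4)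
    (hT : ∀ t ∈ T, ((-t.1, t.2) : ZMod (2 * p) × ZMod 4) ∈ T)
    (hpar : ∀ t ∈ T, ZMod.castHom hr (ZMod 2) t.1 = ZMod.castHom hs (ZMod 2) t.2)
    (h20 : ((2, 0) : ZMod (2 * p) × ZMod 4) ∉ T) (h02 : ((0, 2) : ZMod (2 * p) × ZMod 4) ∉ T)
    {t : ZMod (2 * p) × ZMod 4} (ht : t ∈ T) : t = 0 := by
  obtain ⟨h1, h2⟩ := two_mul_eq_zero_of_mem hp Nat.prime_two rfl rfl hT h20 h02 ht
  have key : ∀ b : ZMod 4, 2 * b = 0 →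
      ZMod.castHom (dvd_mul_left 2 2) (ZMod 2) b = 0 ∧ (b ≠ 2 → b = 0) := by decide
  have ha : t.1 = 0 := eq_zero_of_two_mul_eq_zero hodd h1 ((hpar t ht).trans (key _ h2).1)
  refine Prod.ext ha ((key _ h2).2 fun hb => h02 ?_)
  rwa [← Prod.mk.eta (p := t), ha, hb] at ht

end TranslationLattice

section FourFour

instance decidableMemXPlus (r s : ℕ) : DecidablePred (· ∈ XPlus r s) := fun v =>
  inferInstanceAs (Decidable (v.1.val % 2 = v.2.val % 2))

def kleinLabel (x : XPlus 4 4) : ZMod 4 :=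
  (x : ZMod 4 × ZMod 4).1 + 2 * ((x : ZMod 4 × ZMod 4).2.val / 2 : ℕ)

theorem isCycleLabelling_kleinLabel : IsCycleLabelling (GammaPlus 4 4) kleinLabel where
  adj {x y} h := by
    have key : ∀ x y : XPlus 4 4, gammaRel 4 4 x y →
        kleinLabel y = kleinLabel x + 1 ∨ kleinLabel y = kleinLabel x - 1 := by
      unfold gammaRel; decide
    exact key x y (gammaRel_of_adj h)
  exists_adj x := by
    have key : ∀ x : XPlus 4 4, ∃ y : XPlus 4 4, (x : ZMod 4 × ZMod 4) ≠ y ∧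
        gammaRel 4 4 x y ∧ kleinLabel y = kleinLabel x + 1 := by
      unfold gammaRel; decide
    obtain ⟨y, hne, hxy, hy⟩ := key x
    exact ⟨y, ⟨hne, Or.inl hxy⟩, hy⟩
  surjective := by decide

theorem kleinLabel_eq_iff : ∀ x y : XPlus 4 4, kleinLabel x = kleinLabel y ↔
    ((x : ZMod 4 × ZMod 4) = y ∨ (x : ZMod 4 × ZMod 4) = (y : ZMod 4 × ZMod 4) + (2, 2)) := by
  decide

theorem isoCycle_of_isShiftBy_two_two {L : Subgroup (Equiv.Perm (XPlus 4 4))}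
    (hL : ∀ g ∈ L, IsShiftBy Subtype.val g 0 ∨ IsShiftBy Subtype.val g (2, 2))
    (h22 : ∃ g ∈ L, IsShiftBy Subtype.val g (2, 2)) :
    IsoCycle (quotientGraph (GammaPlus 4 4) L) := by
  refine ⟨4, by norm_num, isCycleLabelling_kleinLabel.nonempty_iso (by norm_num) fun x y => ?_⟩
  rw [kleinLabel_eq_iff, mk_eq_mk_iff]
  constructor
  · obtain ⟨g, hg, hg22⟩ := h22
    rintro (h | h)
    · exact ⟨1, L.one_mem, Subtype.ext h.symm⟩
    · exact ⟨g, hg, Subtype.ext ((hg22 y).trans h.symm)⟩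
  · rintro ⟨g, hg, rfl⟩
    exact (hL g hg).imp (fun h => (h y).trans (add_zero _)) (fun h => h y)

theorem isoCycle_of_four_four {L : Subgroup (Equiv.Perm (XPlus 4 4))} (hL0 : L ≠ ⊥)
    (htr : ∀ g ∈ L, ∃ t, IsShiftBy Subtype.val g t)
    (hT : ∀ t ∈ shiftSubgroup L Subtype.val,
      ((-t.1, t.2) : ZMod 4 × ZMod 4) ∈ shiftSubgroup L Subtype.val)
    (h20 : ((2, 0) : ZMod 4 × ZMod 4) ∉ shiftSubgroup L Subtype.val)
    (h02 : ((0, 2) : ZMod 4 × ZMod 4) ∉ shiftSubgroup L Subtype.val) :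
    IsoCycle (quotientGraph (GammaPlus 4 4) L) := by
  have hL : ∀ g ∈ L, IsShiftBy Subtype.val g 0 ∨ IsShiftBy Subtype.val g (2, 2) := fun g hg => by
    obtain ⟨t, ht⟩ := htr g hg
    rcases eq_zero_or_eq_two_two_of_mem hT h20 h02 ⟨g, hg, ht⟩ with rfl | rfl
    exacts [Or.inl ht, Or.inr ht]
  obtain ⟨⟨g, hg⟩, hg1⟩ := Subgroup.ne_bot_iff_exists_ne_one.1 hL0
  refine isoCycle_of_isShiftBy_two_two hL ⟨g, hg, (hL g hg).resolve_left fun h => hg1 ?_⟩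
  exact Subtype.ext (h.eq Subtype.val_injective isShiftBy_one)

end FourFour

section NuSquared

variable {r s : ℕ} (hre : 2 ∣ r) (hr0 : r ≠ 0) (hse : 2 ∣ s) (hs0 : s ≠ 0)

theorem nuSqP_mem_GPlusGroup : nuSqP r s hse hs0 ∈ GPlusGroup r s hre hr0 hse hs0 := by
  have h : nuSqP r s hse hs0 = muNuP r s hre hr0 hse hs0 ^ 2 * (muSqP r s hre hr0)⁻¹ := by
    refine (isShiftBy_nuSqP hse hs0).eq Subtype.val_injective ?_
    convert ((isShiftBy_muNuP hre hr0 hse hs0).pow 2).mul (isShiftBy_muSqP hre hr0).inv using 1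
    ext <;> simp
  rw [h]
  exact mul_mem (pow_mem (Subgroup.subset_closure (by simp)) 2)
    (inv_mem (Subgroup.subset_closure (by simp)))

theorem normalIn_closure_nuSqP :
    NormalIn (Subgroup.closure {nuSqP r s hse hs0}) (GPlusGroup r s hre hr0 hse hs0) := by
  refine ⟨(Subgroup.closure_le _).2 (Set.singleton_subset_iff.2
    (nuSqP_mem_GPlusGroup hre hr0 hse hs0)), fun h hh n hn => ?_⟩
  obtain ⟨k, rfl⟩ := Subgroup.mem_closure_singleton.1 hn
  rw [((commute_nuSqP_of_mem_affineSubgroup hse hs0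
    (GPlusGroup_le_affineSubgroup hre hr0 hse hs0 hh)).zpow_right k).eq, mul_inv_cancel_right]
  exact hn

theorem closure_nuSqP_ne_bot (hs3 : 3 ≤ s) : Subgroup.closure {nuSqP r s hse hs0} ≠ ⊥ := by
  intro h
  have h1 := Subgroup.subset_closure (Set.mem_singleton (nuSqP r s hse hs0))
  rw [h, SetLike.mem_coe, Subgroup.mem_bot] at h1
  have h2 := congrArg Prod.snd ((isShiftBy_nuSqP (r := r) hse hs0) ⟨0, zero_mem_XPlus⟩)
  rw [h1, Equiv.Perm.one_apply, Prod.snd_add, left_eq_add, ← Nat.cast_ofNat,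
    ZMod.natCast_eq_zero_iff] at h2
  exact absurd (Nat.le_of_dvd two_pos h2) (by omega)

end NuSquared

theorem isBasic_gammaPlus {r s : ℕ} (hre : 2 ∣ r) (hr0 : r ≠ 0) (hse : 2 ∣ s) (hs0 : s ≠ 0)
    (h : (r = 4 ∧ s = 4) ∨ (∃ p : ℕ, p.Prime ∧ Odd p ∧ r = 4 ∧ s = 2 * p) ∨
      (∃ p : ℕ, p.Prime ∧ Odd p ∧ r = 2 * p ∧ s = 4)) :
    IsBasic (GammaPlus r s) (GPlusGroup r s hre hr0 hse hs0) := by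
  have : NeZero r := ⟨hr0⟩
  have : NeZero s := ⟨hs0⟩
  intro L hL hL0
  by_cases hμ : muSqP r s hre hr0 ∈ L
  · exact (isCycleLabelling_snd hre hse).card_le_two_or_isoCycle
      (fun g hg => exists_isShiftBy_snd_of_mem_affineSubgroup
        (GPlusGroup_le_affineSubgroup hre hr0 hse hs0 (hL.1 hg)))
      fun x y => mk_eq_mk_of_snd_eq hre hr0 hse hμ
  have htr : ∀ g ∈ L, ∃ t, IsShiftBy Subtype.val g t := fun g hg =>
    exists_isShiftBy_of_muSqP_not_mem hL hμ hg
  by_cases hν : nuSqP r s hse hs0 ∈ L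
  · exact (isCycleLabelling_fst hre hse).card_le_two_or_isoCycle
      (fun g hg => let ⟨t, ht⟩ := htr g hg; ⟨t.1, fun x => congrArg Prod.fst (ht x)⟩)
      fun x y => mk_eq_mk_of_fst_eq hre hse hs0 hν
  have hT := fun t (ht : t ∈ shiftSubgroup L Subtype.val) => neg_fst_mem_shiftSubgroup hL ht
  have h20 : ((2, 0) : ZMod r × ZMod s) ∉ shiftSubgroup L Subtype.val := fun h =>
    hμ (mem_of_isShiftBy_mem_shiftSubgroup (isShiftBy_muSqP hre hr0) h)
  have h02 : ((0, 2) : ZMod r × ZMod s) ∉ shiftSubgroup L Subtype.val := fun h =>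
    hν (mem_of_isShiftBy_mem_shiftSubgroup (isShiftBy_nuSqP hse hs0) h)
  have hpar : ∀ t ∈ shiftSubgroup L Subtype.val,
      ZMod.castHom hre (ZMod 2) t.1 = ZMod.castHom hse (ZMod 2) t.2 :=
    fun t ⟨_, _, hg⟩ => hg.castHom_fst_eq_castHom_snd hre hse
  rcases h with ⟨rfl, rfl⟩ | ⟨p, hp, hodd, rfl, rfl⟩ | ⟨p, hp, hodd, rfl, rfl⟩
  · exact Or.inr (isoCycle_of_four_four hL0 htr hT h20 h02)
  · exact absurd (eq_bot_of_forall_mem_shiftSubgroup_eq_zero htr fun t ht =>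
      eq_zero_of_mem_of_four_two_mul hodd hp hre hse hT hpar h20 h02 ht) hL0
  · exact absurd (eq_bot_of_forall_mem_shiftSubgroup_eq_zero htr fun t ht =>
      eq_zero_of_mem_of_two_mul_four hodd hp hre hse hT hpar h20 h02 ht) hL0

/-- for `(r,s)` of the form `(4,4)`, `(4,2p)` or `(2p,4)` with `p` an odd prime,
every normal quotient of `(Γ⁺(r,s), G⁺(r,s))` by a nontrivial normal subgroup is degenerate,
the quotient by `⟨ν²⟩` is `C_r`, the quotient by `⟨μ²⟩` is `C_s`, and the pair is basic of
cycle type. -/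
theorem stmt6 (r s : ℕ) (hre : 2 ∣ r) (hr0 : r ≠ 0) (hse : 2 ∣ s) (hs0 : s ≠ 0)
    (h : (r = 4 ∧ s = 4) ∨ (∃ p : ℕ, p.Prime ∧ Odd p ∧ r = 4 ∧ s = 2 * p) ∨
      (∃ p : ℕ, p.Prime ∧ Odd p ∧ r = 2 * p ∧ s = 4)) :
    (∀ L : Subgroup (Equiv.Perm (XPlus r s)),
      NormalIn L (GPlusGroup r s hre hr0 hse hs0) → L ≠ ⊥ →
      Nat.card (Quotient (orbitSetoid L)) ≤ 2 ∨ IsoCycle (quotientGraph (GammaPlus r s) L)) ∧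
    Nonempty (quotientGraph (GammaPlus r s) (Subgroup.closure {nuSqP r s hse hs0}) ≃g
      SimpleGraph.cycleGraph r) ∧
    Nonempty (quotientGraph (GammaPlus r s) (Subgroup.closure {muSqP r s hre hr0}) ≃g
      SimpleGraph.cycleGraph s) ∧
    BasicOfCycleType (GammaPlus r s) (GPlusGroup r s hre hr0 hse hs0) := by
  obtain ⟨hr3, hs3⟩ : 3 ≤ r ∧ 3 ≤ s := by
    rcases h with ⟨rfl, rfl⟩ | ⟨p, hp, -, rfl, rfl⟩ | ⟨p, hp, -, rfl, rfl⟩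
    · norm_num
    · exact ⟨by norm_num, by linarith [hp.two_le]⟩
    · exact ⟨by linarith [hp.two_le], by norm_num⟩
  have hbasic := isBasic_gammaPlus hre hr0 hse hs0 h
  have hν := nonempty_iso_cycleGraph_nuSq hre hr0 hse hs0
  exact ⟨hbasic, hν, nonempty_iso_cycleGraph_muSq hre hr0 hse hs0, hbasic,
    _, normalIn_closure_nuSqP hre hr0 hse hs0, closure_nuSqP_ne_bot hse hs0 hs3, r, hr3, hν⟩

end OG4
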